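/- arXiv:2306.09367 — 3 statements merged into one kernel-verified Lean document; each statement's English description precedes it below -/
import Mathlib

section
/- Under the conditions β < 1 and b_q < ∞, the Q-process satisfies E[W(n)] = 1 + γ_q·(1 − β^n) for every n ≥ 0. -/
open MeasureTheory ProbabilityTheory Filter Topology Finset
open scoped NNReal ENNReal

/-!
By the Markov property, the means `m n = E[W n]` satisfy the affine recursion
`m (n + 1) = β m n + (1 - β + b_q / β)` with `m 0 = 1`, whose solution is `1 + γ_q (1 - β ^ n)`.
The one-step mean is `∑ j, j Q i j = (i β q ^ i)⁻¹ ∑ j, j² P i j q ^ j`, and this second moment is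
computed formally: `P i j` is the `j`-th coefficient of `(∑ k, p k X ^ k) ^ i` (a power series is
determined by its values on an interval `(0, r)`), and the Euler operator `θ = X d/dX` is a
derivation, so the Leibniz rule turns `∑ p_k q^k = q`, `∑ k p_k q^k = q β` and
`∑ k² p_k q^k = q (b_q + β)` into `∑ j, j² P i j q ^ j = q ^ i (i (b_q + β) + i (i - 1) β²)`.
-/

theorem Summable.mul_pow_of_nonneg {p : ℕ → ℝ} (hsum : Summable p) (hp : ∀ k, 0 ≤ p k) {s : ℝ}
    (hs : s ∈ Set.Icc (0 : ℝ) 1) : Summable fun k => p k * s ^ k :=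
  hsum.of_nonneg_of_le (fun k => mul_nonneg (hp k) (pow_nonneg hs.1 k))
    fun k => mul_le_of_le_one_right (hp k) (pow_le_one₀ hs.1 hs.2)

theorem summable_of_tsum_ne_zero {ι α : Type*} [AddCommMonoid α] [TopologicalSpace α] {f : ι → α}
    (h : ∑' i, f i ≠ 0) : Summable f :=
  by_contra fun hf => h (tsum_eq_zero_of_not_summable hf)

theorem norm_mul_pow_le {a : ℕ → ℝ} {r s : ℝ} (hs : s ∈ Set.Icc 0 r) (n : ℕ) :
    ‖a n * s ^ n‖ ≤ ‖a n‖ * r ^ n := by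
  rw [norm_mul, norm_pow, Real.norm_of_nonneg hs.1]
  exact mul_le_mul_of_nonneg_left (pow_le_pow_left₀ hs.1 hs.2 n) (norm_nonneg _)

theorem tendsto_tsum_mul_pow_nhdsGT_zero {a : ℕ → ℝ} {r : ℝ} (hr : 0 < r)
    (ha : Summable fun n => ‖a n‖ * r ^ n) :
    Tendsto (fun s => ∑' n, a n * s ^ n) (𝓝[>] 0) (𝓝 (a 0)) := by
  have hcont : ContinuousOn (fun s => ∑' n, a n * s ^ n) (Set.Icc 0 r) :=
    continuousOn_tsum (fun n => by fun_prop) ha fun n s hs => norm_mul_pow_le hs n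
  have h0 : ∑' n, a n * (0 : ℝ) ^ n = a 0 := by
    rw [tsum_eq_single 0 fun n hn => by simp [hn]]; simp
  simpa [h0] using ((hcont 0 ⟨le_rfl, hr.le⟩).mono_of_mem_nhdsWithin (Icc_mem_nhdsGT hr)).tendsto

theorem head_eq_of_tsum_mul_pow_eq {a b : ℕ → ℝ} {r : ℝ} (hr : 0 < r)
    (ha : Summable fun n => ‖a n‖ * r ^ n) (hb : Summable fun n => ‖b n‖ * r ^ n)
    (h : ∀ s ∈ Set.Ioo 0 r, ∑' n, a n * s ^ n = ∑' n, b n * s ^ n) : a 0 = b 0 :=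
  tendsto_nhds_unique_of_eventuallyEq (tendsto_tsum_mul_pow_nhdsGT_zero hr ha)
    (tendsto_tsum_mul_pow_nhdsGT_zero hr hb) (eventually_of_mem (Ioo_mem_nhdsGT hr) h)

theorem tsum_mul_pow_eq_head_add {a : ℕ → ℝ} {r s : ℝ} (ha : Summable fun n => ‖a n‖ * r ^ n)
    (hs : s ∈ Set.Icc 0 r) : ∑' n, a n * s ^ n = a 0 + s * ∑' n, a (n + 1) * s ^ n := by
  rw [(ha.of_norm_bounded (norm_mul_pow_le hs)).tsum_eq_zero_add, ← tsum_mul_left]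
  simp only [pow_zero, mul_one, pow_succ]
  congr 1
  exact tsum_congr fun n => by ring

theorem eq_of_tsum_mul_pow_eq {a b : ℕ → ℝ} {r : ℝ} (hr : 0 < r)
    (ha : Summable fun n => ‖a n‖ * r ^ n) (hb : Summable fun n => ‖b n‖ * r ^ n)
    (h : ∀ s ∈ Set.Ioo 0 r, ∑' n, a n * s ^ n = ∑' n, b n * s ^ n) : a = b := by
  funext m
  induction m generalizing a b with
  | zero => exact head_eq_of_tsum_mul_pow_eq hr ha hb h
  | succ m ih =>
    have shift {c : ℕ → ℝ} (hc : Summable fun n => ‖c n‖ * r ^ n) :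
        Summable fun n => ‖c (n + 1)‖ * r ^ n :=
      ((summable_nat_add_iff 1).2 hc |>.mul_left r⁻¹).congr fun n => by field_simp; ring
    refine ih (shift ha) (shift hb) fun s hs => ?_
    have hab := h s hs
    rw [tsum_mul_pow_eq_head_add ha (Set.Ioo_subset_Icc_self hs),
      tsum_mul_pow_eq_head_add hb (Set.Ioo_subset_Icc_self hs),
      head_eq_of_tsum_mul_pow_eq hr ha hb h] at hab
    exact mul_left_cancel₀ hs.1.ne' (add_left_cancel hab)

namespace PowerSeries

variable {R : Type*} [CommSemiring R]

noncomputable def eulerDeriv : Derivation R R⟦X⟧ R⟦X⟧ := (X : R⟦X⟧) • derivative R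

theorem coeff_eulerDeriv (φ : R⟦X⟧) (n : ℕ) : coeff n (eulerDeriv φ) = n * coeff n φ := by
  rcases n with _ | n
  · simp [eulerDeriv]
  · simp [eulerDeriv, coeff_succ_X_mul, coeff_derivative, mul_comm]

theorem coeff_eulerDeriv_nonneg {φ : ℝ⟦X⟧} (hφ : ∀ n, 0 ≤ coeff n φ) (n : ℕ) :
    0 ≤ coeff n (eulerDeriv φ) := by
  rw [coeff_eulerDeriv]; exact mul_nonneg n.cast_nonneg (hφ n)

theorem coeff_mul_nonneg {φ ψ : ℝ⟦X⟧} (hφ : ∀ n, 0 ≤ coeff n φ) (hψ : ∀ n, 0 ≤ coeff n ψ)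
    (n : ℕ) : 0 ≤ coeff n (φ * ψ) := by
  rw [coeff_mul]; exact sum_nonneg fun _ _ => mul_nonneg (hφ _) (hψ _)

theorem coeff_pow_nonneg {φ : ℝ⟦X⟧} (hφ : ∀ n, 0 ≤ coeff n φ) (i n : ℕ) :
    0 ≤ coeff n (φ ^ i) := by
  induction i generalizing n with
  | zero => rw [pow_zero, coeff_one]; split_ifs <;> norm_num
  | succ i ih => rw [pow_succ]; exact coeff_mul_nonneg ih hφ n

theorem hasSum_coeff_mul {φ ψ : ℝ⟦X⟧} {a b : ℝ} (hφ : ∀ n, 0 ≤ coeff n φ)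
    (hψ : ∀ n, 0 ≤ coeff n ψ) (ha : HasSum (fun n => coeff n φ) a)
    (hb : HasSum (fun n => coeff n ψ) b) : HasSum (fun n => coeff n (φ * ψ)) (a * b) := by
  have hprod : Summable fun x : ℕ × ℕ => coeff x.1 φ * coeff x.2 ψ :=
    ha.summable.mul_of_nonneg hb.summable hφ hψ
  have hmul := ha.summable.tsum_mul_tsum_eq_tsum_sum_antidiagonal hb.summable hprod
  rw [ha.tsum_eq, hb.tsum_eq] at hmul
  simp_rw [coeff_mul, hmul]
  exact (summable_sum_mul_antidiagonal_of_summable_mul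
    (f := fun n => coeff n φ) (g := fun n => coeff n ψ) hprod).hasSum

theorem hasSum_coeff_pow {φ : ℝ⟦X⟧} {a : ℝ} (hφ : ∀ n, 0 ≤ coeff n φ)
    (ha : HasSum (fun n => coeff n φ) a) (i : ℕ) : HasSum (fun n => coeff n (φ ^ i)) (a ^ i) := by
  induction i with
  | zero =>
    simp only [pow_zero, coeff_one]
    exact hasSum_ite_eq 0 1
  | succ i ih => simpa only [pow_succ] using hasSum_coeff_mul (coeff_pow_nonneg hφ i) hφ ih ha

theorem eulerDeriv_mul (φ ψ : R⟦X⟧) : eulerDeriv (φ * ψ) = φ * eulerDeriv ψ + ψ * eulerDeriv φ := by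
  simp [Derivation.leibniz]

-- Normalising the moments by `a` keeps the exponents `i - 1`, `i - 2` out of the formulas.
theorem hasSum_coeff_eulerDeriv_pow {φ : ℝ⟦X⟧} {a b c : ℝ} (hφ : ∀ n, 0 ≤ coeff n φ)
    (h₀ : HasSum (fun n => coeff n φ) a) (h₁ : HasSum (fun n => coeff n (eulerDeriv φ)) (a * b))
    (h₂ : HasSum (fun n => coeff n (eulerDeriv (eulerDeriv φ))) (a * c)) (i : ℕ) :
    HasSum (fun n => coeff n (eulerDeriv (φ ^ i))) (a ^ i * (i * b)) ∧
      HasSum (fun n => coeff n (eulerDeriv (eulerDeriv (φ ^ i))))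
        (a ^ i * (i * c + i * (i - 1) * b ^ 2)) := by
  have hφ₁ := coeff_eulerDeriv_nonneg hφ
  have hφ₂ := coeff_eulerDeriv_nonneg hφ₁
  induction i with
  | zero => simp [hasSum_zero]
  | succ i ih =>
    obtain ⟨ih₁, ih₂⟩ := ih
    have hpow := coeff_pow_nonneg hφ i
    have hpow₁ := coeff_eulerDeriv_nonneg hpow
    have hpow₂ := coeff_eulerDeriv_nonneg hpow₁
    have h₀i := hasSum_coeff_pow hφ h₀ i
    rw [pow_succ, eulerDeriv_mul, map_add, eulerDeriv_mul, eulerDeriv_mul]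
    constructor
    · convert (hasSum_coeff_mul hpow hφ₁ h₀i h₁).add (hasSum_coeff_mul hφ hpow₁ h₀ ih₁) using 1
      · simp
      · push_cast; ring
    · convert ((hasSum_coeff_mul hpow hφ₂ h₀i h₂).add (hasSum_coeff_mul hφ₁ hpow₁ h₁ ih₁)).add
        ((hasSum_coeff_mul hφ hpow₂ h₀ ih₂).add (hasSum_coeff_mul hpow₁ hφ₁ ih₁ h₁)) using 1
      · simp [add_assoc]
      · push_cast; ring

theorem coeff_rescale_mk (p : ℕ → ℝ) (s : ℝ) (n : ℕ) :
    coeff n (rescale s (mk p)) = s ^ n * p n := by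
  rw [coeff_rescale, coeff_mk]

theorem hasSum_coeff_rescale_mk {p : ℕ → ℝ} {s : ℝ} (h : Summable fun k => p k * s ^ k) :
    HasSum (fun n => coeff n (rescale s (mk p))) (∑' k, p k * s ^ k) := by
  simpa only [coeff_rescale_mk, mul_comm] using h.hasSum

theorem hasSum_coeff_eulerDeriv_rescale_mk {p : ℕ → ℝ} {s : ℝ}
    (h : Summable fun k : ℕ => ((k : ℝ) + 1) * p (k + 1) * s ^ k) :
    HasSum (fun n => coeff n (eulerDeriv (rescale s (mk p))))
      (s * ∑' k : ℕ, ((k : ℝ) + 1) * p (k + 1) * s ^ k) := by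
  refine (hasSum_nat_add_iff' 1).mp ?_
  have hterm (n : ℕ) : coeff (n + 1) (eulerDeriv (rescale s (mk p))) =
      s * (((n : ℝ) + 1) * p (n + 1) * s ^ n) := by
    rw [coeff_eulerDeriv, coeff_rescale_mk]; push_cast; ring
  simpa [hterm, coeff_eulerDeriv] using h.hasSum.mul_left s

theorem hasSum_coeff_eulerDeriv_eulerDeriv_rescale_mk {p : ℕ → ℝ} {s : ℝ}
    (h₁ : Summable fun k : ℕ => ((k : ℝ) + 1) * p (k + 1) * s ^ k)
    (h₂ : Summable fun k : ℕ => ((k : ℝ) + 2) * ((k : ℝ) + 1) * p (k + 2) * s ^ k) :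
    HasSum (fun n => coeff n (eulerDeriv (eulerDeriv (rescale s (mk p)))))
      (s ^ 2 * ∑' k : ℕ, ((k : ℝ) + 2) * ((k : ℝ) + 1) * p (k + 2) * s ^ k +
        s * ∑' k : ℕ, ((k : ℝ) + 1) * p (k + 1) * s ^ k) := by
  have hfalling : HasSum (fun n : ℕ => (n : ℝ) * (n - 1) * (s ^ n * p n))
      (s ^ 2 * ∑' k : ℕ, ((k : ℝ) + 2) * ((k : ℝ) + 1) * p (k + 2) * s ^ k) := by
    refine (hasSum_nat_add_iff' 2).mp ?_
    have hterm (n : ℕ) : ((n : ℝ) + 2) * ((n : ℝ) + 2 - 1) * (s ^ (n + 2) * p (n + 2)) =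
        s ^ 2 * (((n : ℝ) + 2) * ((n : ℝ) + 1) * p (n + 2) * s ^ n) := by
      ring
    simpa [hterm, sum_range_succ] using h₂.hasSum.mul_left (s ^ 2)
  convert hfalling.add (hasSum_coeff_eulerDeriv_rescale_mk h₁) using 1
  funext n
  simp only [coeff_eulerDeriv, coeff_rescale_mk]
  ring

end PowerSeries

open PowerSeries in
theorem coeff_mk_pow_eq_of_tsum_pow_eq {p : ℕ → ℝ} {P : ℕ → ℕ → ℝ} (hp : ∀ k, 0 ≤ p k)
    (hsum : Summable p) (hp₀ : 0 < p 0) (hP : ∀ i j, 0 ≤ P i j)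
    (hgen : ∀ i : ℕ, ∀ s ∈ Set.Ico (0 : ℝ) 1, (∑' k, p k * s ^ k) ^ i = ∑' j, P i j * s ^ j)
    (i j : ℕ) : P i j = coeff j (mk p ^ i) := by
  have hcoeff (n : ℕ) : 0 ≤ coeff n (mk p ^ i) := coeff_pow_nonneg (by simpa using hp) i n
  have hser (s : ℝ) (hs : s ∈ Set.Icc (0 : ℝ) 1) :
      HasSum (fun j => coeff j (mk p ^ i) * s ^ j) ((∑' k, p k * s ^ k) ^ i) := by
    have hrescale (n : ℕ) : 0 ≤ coeff n (rescale s (mk p)) := by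
      rw [coeff_rescale_mk]; exact mul_nonneg (pow_nonneg hs.1 n) (hp n)
    convert hasSum_coeff_pow hrescale
      (hasSum_coeff_rescale_mk (hsum.mul_pow_of_nonneg hp hs)) i using 2 with n
    rw [← map_pow, coeff_rescale, mul_comm]
  set r : ℝ := 1 / 2
  have hr : r ∈ Set.Ico (0 : ℝ) 1 := by norm_num [r]
  have hf_pos : 0 < ∑' k, p k * r ^ k := by
    have h := (hsum.mul_pow_of_nonneg hp ⟨hr.1, hr.2.le⟩).le_tsum 0
      fun k _ => mul_nonneg (hp k) (pow_nonneg hr.1 k)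
    rw [pow_zero, mul_one] at h
    exact hp₀.trans_le h
  -- `hgen` only equates `tsum`s; summability follows from the value `(∑' k, p k * r ^ k) ^ i ≠ 0`.
  have hP_summable : Summable fun j => ‖P i j‖ * r ^ j := by
    simp_rw [Real.norm_of_nonneg (hP i _)]
    exact summable_of_tsum_ne_zero (hgen i r hr ▸ pow_ne_zero i hf_pos.ne')
  have hcoeff_summable : Summable fun j => ‖coeff j (mk p ^ i)‖ * r ^ j := by
    simpa only [Real.norm_of_nonneg (hcoeff _)] using (hser r ⟨hr.1, hr.2.le⟩).summable
  refine congrFun (eq_of_tsum_mul_pow_eq (by norm_num [r]) hP_summable hcoeff_summable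
    fun s hs => ?_) j
  rw [← hgen i s ⟨hs.1.le, hs.2.trans hr.2⟩,
    (hser s ⟨hs.1.le, hs.2.le.trans hr.2.le⟩).tsum_eq]

theorem lintegral_comp_eq_tsum_preimage {Ω β : Type*} [MeasurableSpace Ω] [Countable β]
    [MeasurableSpace β] [MeasurableSingletonClass β] {μ : Measure Ω} {Y : Ω → β}
    (hY : Measurable Y) (F : β → ℝ≥0∞) :
    ∫⁻ ω, F (Y ω) ∂μ = ∑' b, F b * μ (Y ⁻¹' {b}) := by
  rw [← lintegral_map Measurable.of_discrete hY, lintegral_countable']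
  simp_rw [Measure.map_apply hY (measurableSet_singleton _)]

theorem Fin.clamp_of_le {n k : ℕ} (hk : k ≤ n) : Fin.clamp k n = ⟨k, by omega⟩ := by
  ext; simp [Fin.clamp, hk]

section MarkovChain

variable {Ω α : Type*} [MeasurableSpace Ω]

def IsMarkovChain (μ : Measure Ω) (X : ℕ → Ω → α) (ν : α → ℝ≥0∞) (K : α → α → ℝ≥0∞) : Prop :=
  ∀ n (i : ℕ → α), μ {ω | ∀ k ≤ n, X k ω = i k} = ν (i 0) * ∏ k ∈ range n, K (i k) (i (k + 1))

def pathUpTo (X : ℕ → Ω → α) (n : ℕ) (ω : Ω) : Fin (n + 1) → α := fun k => X k ω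

variable {μ : Measure Ω} {X : ℕ → Ω → α} {ν : α → ℝ≥0∞} {K : α → α → ℝ≥0∞}

theorem IsMarkovChain.measure_pathUpTo_preimage (hX : IsMarkovChain μ X ν K) (n : ℕ)
    (v : Fin (n + 1) → α) :
    μ (pathUpTo X n ⁻¹' {v}) = ν (v 0) * ∏ k : Fin n, K (v k.castSucc) (v k.succ) := by
  have hset : pathUpTo X n ⁻¹' {v} = {ω | ∀ k ≤ n, X k ω = v (Fin.clamp k n)} := by
    ext ω
    simp only [Set.mem_preimage, Set.mem_singleton_iff, Set.mem_ofPred_eq, funext_iff, pathUpTo]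
    constructor
    · intro h k hk
      rw [Fin.clamp_of_le hk, ← h]
    · intro h k
      rw [h k (by omega), Fin.clamp_of_le (by omega)]
  rw [hset, hX, Finset.prod_range, Fin.clamp_of_le (Nat.zero_le n)]
  congr 1
  refine Finset.prod_congr rfl fun k _ => ?_
  rw [Fin.clamp_of_le (by omega), Fin.clamp_of_le (by omega)]
  rfl

theorem IsMarkovChain.measure_pathUpTo_snoc (hX : IsMarkovChain μ X ν K) (n : ℕ)
    (v : Fin (n + 1) → α) (b : α) :
    μ (pathUpTo X (n + 1) ⁻¹' {Fin.snoc v b}) =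
      μ (pathUpTo X n ⁻¹' {v}) * K (v (Fin.last n)) b := by
  rw [hX.measure_pathUpTo_preimage, hX.measure_pathUpTo_preimage, Fin.prod_univ_castSucc, mul_assoc]
  simp only [Fin.snoc_apply_zero, Fin.snoc_castSucc, ← Fin.castSucc_succ, Fin.succ_last,
    Fin.snoc_last]

variable [Countable α] [MeasurableSpace α] [MeasurableSingletonClass α]

theorem IsMarkovChain.lintegral_comp_zero (hX : IsMarkovChain μ X ν K) (hmeas : Measurable (X 0))
    (g : α → ℝ≥0∞) : ∫⁻ ω, g (X 0 ω) ∂μ = ∑' a, g a * ν a := by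
  rw [lintegral_comp_eq_tsum_preimage hmeas g]
  refine tsum_congr fun a => ?_
  have h := hX 0 fun _ => a
  simp only [nonpos_iff_eq_zero, forall_eq, range_zero, prod_empty, mul_one] at h
  rw [← h]
  rfl

theorem IsMarkovChain.lintegral_comp_succ (hX : IsMarkovChain μ X ν K)
    (hmeas : ∀ n, Measurable (X n)) (n : ℕ) (g : α → ℝ≥0∞) :
    ∫⁻ ω, g (X (n + 1) ω) ∂μ = ∫⁻ ω, ∑' b, K (X n ω) b * g b ∂μ := by
  have hpath (m : ℕ) : Measurable (pathUpTo X m) := measurable_pi_lambda _ fun k => hmeas k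
  change ∫⁻ ω, g (pathUpTo X (n + 1) ω (Fin.last (n + 1))) ∂μ =
    ∫⁻ ω, ∑' b, K (pathUpTo X n ω (Fin.last n)) b * g b ∂μ
  rw [lintegral_comp_eq_tsum_preimage (hpath _) (fun v => g (v (Fin.last (n + 1)))),
    lintegral_comp_eq_tsum_preimage (hpath _) (fun v => ∑' b, K (v (Fin.last n)) b * g b),
    ← (Fin.snocEquiv fun _ => α).tsum_eq, ENNReal.tsum_prod', ENNReal.tsum_comm]
  refine tsum_congr fun v => ?_
  rw [← ENNReal.tsum_mul_right]
  refine tsum_congr fun b => ?_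
  rw [show (Fin.snocEquiv fun _ => α) (b, v) = Fin.snoc v b from rfl, hX.measure_pathUpTo_snoc,
    Fin.snoc_last]
  ring

end MarkovChain

theorem IsMarkovChain.lintegral_eq_geom_of_affine_mean {Ω : Type*} [MeasurableSpace Ω]
    {μ : Measure Ω} [IsProbabilityMeasure μ] {X : ℕ → Ω → ℕ} {ν : ℕ → ℝ≥0∞} {K : ℕ → ℕ → ℝ≥0∞}
    (hX : IsMarkovChain μ X ν K) (hmeas : ∀ n, Measurable (X n)) {β c : ℝ≥0∞}
    (hmean : ∀ n ω, ∑' b, K (X n ω) b * b = β * X n ω + c) (n : ℕ) :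
    ∫⁻ ω, (X n ω : ℝ≥0∞) ∂μ = β ^ n * ∫⁻ ω, (X 0 ω : ℝ≥0∞) ∂μ + c * ∑ k ∈ range n, β ^ k := by
  induction n with
  | zero => simp
  | succ n ih =>
    rw [hX.lintegral_comp_succ hmeas n (fun b => (b : ℝ≥0∞))]
    simp_rw [hmean n]
    rw [lintegral_add_right _ measurable_const,
      lintegral_const_mul β (f := fun ω => (X n ω : ℝ≥0∞)) (Measurable.of_discrete.comp (hmeas n)),
      ih, lintegral_const, measure_univ, geom_sum_succ]
    ring

section QProcess

variable {Ω : Type*} [MeasurableSpace Ω] {μ : Measure Ω} {W : ℕ → Ω → ℕ} {P : ℕ → ℕ → ℝ}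
  {q β : ℝ}

noncomputable def qTransition (P : ℕ → ℕ → ℝ) (q β : ℝ) (a b : ℕ) : ℝ :=
  (b : ℝ) * q ^ ((b : ℤ) - (a : ℤ)) / ((a : ℝ) * β) * P a b

theorem qTransition_nonneg (hP : ∀ a b, 0 ≤ P a b) (hq : 0 ≤ q) (hβ : 0 ≤ β) (a b : ℕ) :
    0 ≤ qTransition P q β a b := by
  unfold qTransition
  have := hP a b
  positivity

theorem isMarkovChain_qProcess (hpos : ∀ n ω, 1 ≤ W n ω) (hP : ∀ a b, 0 ≤ P a b)
    (hq : 0 ≤ q) (hβ : 0 ≤ β)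
    (hfdd : ∀ n : ℕ, ∀ i : ℕ → ℕ, (∀ k, k ≤ n → 1 ≤ i k) →
      μ {ω | ∀ k, k ≤ n → W k ω = i k} = ENNReal.ofReal ((if i 0 = 1 then (1 : ℝ) else 0) *
        ∏ k ∈ range n, qTransition P q β (i k) (i (k + 1)))) :
    IsMarkovChain μ W (fun a => if a = 1 then 1 else 0)
      (fun a b => ENNReal.ofReal (qTransition P q β a b)) := by
  intro n i
  beta_reduce
  by_cases hi : ∀ k ≤ n, 1 ≤ i k
  · rw [hfdd n i hi, ENNReal.ofReal_mul (by positivity),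
      ENNReal.ofReal_prod_of_nonneg fun k _ => qTransition_nonneg hP hq hβ _ _]
    split_ifs <;> simp
  · -- a path through `0` has weight `0`: via `i 0 ≠ 1`, or via the factor `b` of `qTransition a b`
    push Not at hi
    obtain ⟨k, hk, hik⟩ := hi
    have hik : i k = 0 := by omega
    have hempty : {ω | ∀ k ≤ n, W k ω = i k} = ∅ :=
      Set.eq_empty_of_forall_notMem fun ω hω => by have := hpos k ω; have := hω k hk; omega
    rw [hempty, measure_empty]
    rcases k with _ | k
    · simp [hik]
    · exact (mul_eq_zero_of_right _
        (prod_eq_zero (mem_range.2 hk) (by simp [qTransition, hik]))).symm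

open PowerSeries in
theorem hasSum_mul_qTransition {p : ℕ → ℝ} (hp : ∀ k, 0 ≤ p k) (hq : 0 < q) (hβ : 0 < β) {b : ℝ}
    (h₀ : HasSum (fun n => coeff n (rescale q (mk p))) q)
    (h₁ : HasSum (fun n => coeff n (eulerDeriv (rescale q (mk p)))) (q * β))
    (h₂ : HasSum (fun n => coeff n (eulerDeriv (eulerDeriv (rescale q (mk p))))) (q * (b + β)))
    (hPcoeff : ∀ i j, P i j = coeff j (mk p ^ i)) {a : ℕ} (ha : 1 ≤ a) :
    HasSum (fun j : ℕ => (j : ℝ) * qTransition P q β a j) (β * a + (1 - β + b / β)) := by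
  have hψ (n : ℕ) : 0 ≤ coeff n (rescale q (mk p)) := by
    rw [coeff_rescale_mk]; exact mul_nonneg (pow_nonneg hq.le n) (hp n)
  obtain ⟨-, h⟩ := hasSum_coeff_eulerDeriv_pow hψ h₀ h₁ h₂ a
  have ha' : (0 : ℝ) < a := by exact_mod_cast ha
  have hterm (j : ℕ) : (j : ℝ) * qTransition P q β a j =
      (q ^ a * a * β)⁻¹ * coeff j (eulerDeriv (eulerDeriv (rescale q (mk p) ^ a))) := by
    rw [← map_pow, coeff_eulerDeriv, coeff_eulerDeriv, coeff_rescale, ← hPcoeff, qTransition,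
      zpow_sub₀ hq.ne', zpow_natCast, zpow_natCast]
    field_simp
  have hvalue : β * a + (1 - β + b / β) =
      (q ^ a * a * β)⁻¹ * (q ^ a * (a * (b + β) + a * (a - 1) * β ^ 2)) := by
    field_simp
    ring
  rw [funext hterm, hvalue]
  exact h.mul_left _

theorem tsum_ofReal_qTransition_mul {c : ℝ} (hP : ∀ a b, 0 ≤ P a b) (hq : 0 ≤ q) (hβ : 0 ≤ β)
    (hc : 0 ≤ c) {a : ℕ} (h : HasSum (fun b : ℕ => (b : ℝ) * qTransition P q β a b) (β * a + c)) :
    ∑' b : ℕ, ENNReal.ofReal (qTransition P q β a b) * b =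
      ENNReal.ofReal β * a + ENNReal.ofReal c :=
  calc ∑' b : ℕ, ENNReal.ofReal (qTransition P q β a b) * b
      = ∑' b : ℕ, ENNReal.ofReal (b * qTransition P q β a b) := by
        simp_rw [ENNReal.ofReal_mul (Nat.cast_nonneg _), ENNReal.ofReal_natCast, mul_comm]
    _ = ENNReal.ofReal (β * a + c) := by
        rw [← h.tsum_eq, ENNReal.ofReal_tsum_of_nonneg
          (fun b => mul_nonneg b.cast_nonneg (qTransition_nonneg hP hq hβ _ _)) h.summable]
    _ = ENNReal.ofReal β * a + ENNReal.ofReal c := by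
        rw [ENNReal.ofReal_add (by positivity) hc, ENNReal.ofReal_mul hβ, ENNReal.ofReal_natCast]

theorem integral_qProcess [IsProbabilityMeasure μ] (hmeas : ∀ n, Measurable (W n))
    (hpos : ∀ n ω, 1 ≤ W n ω) (hP : ∀ a b, 0 ≤ P a b) (hq : 0 ≤ q) (hβ : 0 ≤ β)
    (hfdd : ∀ n : ℕ, ∀ i : ℕ → ℕ, (∀ k, k ≤ n → 1 ≤ i k) →
      μ {ω | ∀ k, k ≤ n → W k ω = i k} = ENNReal.ofReal ((if i 0 = 1 then (1 : ℝ) else 0) *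
        ∏ k ∈ range n, qTransition P q β (i k) (i (k + 1))))
    {c : ℝ} (hc : 0 ≤ c)
    (hmean : ∀ a, 1 ≤ a → HasSum (fun b : ℕ => (b : ℝ) * qTransition P q β a b) (β * a + c))
    (n : ℕ) : ∫ ω, (W n ω : ℝ) ∂μ = β ^ n + c * ∑ k ∈ range n, β ^ k := by
  have hW := isMarkovChain_qProcess hpos hP hq hβ hfdd
  have hstart : ∫⁻ ω, (W 0 ω : ℝ≥0∞) ∂μ = 1 := by
    rw [hW.lintegral_comp_zero (hmeas 0)]
    simp
  have hlint := hW.lintegral_eq_geom_of_affine_mean hmeas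
    (fun n ω => tsum_ofReal_qTransition_mul hP hq hβ hc (hmean _ (hpos n ω))) n
  simp_rw [hstart, mul_one, ← ENNReal.ofReal_pow hβ] at hlint
  rw [← ENNReal.ofReal_sum_of_nonneg fun k _ => pow_nonneg hβ k, ← ENNReal.ofReal_mul hc,
    ← ENNReal.ofReal_add (pow_nonneg hβ n) (by positivity)] at hlint
  have h := integral_toReal (μ := μ) (f := fun ω => (W n ω : ℝ≥0∞))
    (Measurable.of_discrete.comp (hmeas n)).aemeasurable (ae_of_all _ fun ω => by simp)
  simp only [ENNReal.toReal_natCast] at h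
  rw [h, hlint, ENNReal.toReal_ofReal (by positivity)]

end QProcess

open PowerSeries in
theorem expected_Q_process_general
    (p : ℕ → ℝ) (hp_nn : ∀ k, 0 ≤ p k) (hp_sum : ∑' k, p k = 1)
    (hp0 : 0 < p 0)
    (f f' f'' : ℝ → ℝ)
    (hf : ∀ s, f s = ∑' k, p k * s ^ k)
    (hf' : ∀ s, f' s = ∑' k : ℕ, ((k : ℝ) + 1) * p (k + 1) * s ^ k)
    (hf'' : ∀ s, f'' s = ∑' k : ℕ, ((k : ℝ) + 2) * ((k : ℝ) + 1) * p (k + 2) * s ^ k)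
    (hm : Summable fun k : ℕ => (k : ℝ) * p k)
    (q : ℝ) (hq_mem : q ∈ Set.Ioc (0 : ℝ) 1) (hq_fix : f q = q)
    (β : ℝ) (hβ : β = f' q) (hβ_pos : 0 < β) (hβ_lt : β < 1)
    (bq : ℝ) (hbq : bq = q * f'' q)
    (hbq_fin : Summable fun k : ℕ => ((k : ℝ) + 2) * ((k : ℝ) + 1) * p (k + 2) * q ^ k)
    (γq : ℝ) (hγq : γq = bq / (β * (1 - β)))
    (P : ℕ → ℕ → ℝ) (hP_nn : ∀ i j, 0 ≤ P i j)
    (hP : ∀ i : ℕ, ∀ s ∈ Set.Ico (0 : ℝ) 1, (f s) ^ i = ∑' j, P i j * s ^ j)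
    (Ω : Type*) [MeasurableSpace Ω] (μ : Measure Ω) [IsProbabilityMeasure μ]
    (W : ℕ → Ω → ℕ) (hW_meas : ∀ n, Measurable (W n))
    (hW_pos : ∀ n ω, 1 ≤ W n ω)
    (hW_fdd : ∀ n : ℕ, ∀ i : ℕ → ℕ, (∀ k, k ≤ n → 1 ≤ i k) →
      μ {ω | ∀ k, k ≤ n → W k ω = i k} =
        ENNReal.ofReal ((if i 0 = 1 then (1 : ℝ) else 0) *
          ∏ k ∈ Finset.range n,
            (i (k + 1) : ℝ) * q ^ ((i (k + 1) : ℤ) - (i k : ℤ)) / ((i k : ℝ) * β)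
              * P (i k) (i (k + 1)))) :
    ∀ n : ℕ, ∫ ω, (W n ω : ℝ) ∂μ = 1 + γq * (1 - β ^ n) := by
  have hq : q ∈ Set.Icc (0 : ℝ) 1 := Set.Ioc_subset_Icc_self hq_mem
  have hsum : Summable p := summable_of_tsum_ne_zero (hp_sum ▸ one_ne_zero)
  have hf'_sum : Summable fun k : ℕ => ((k : ℝ) + 1) * p (k + 1) * q ^ k := by
    simpa using ((summable_nat_add_iff 1).2 hm).mul_pow_of_nonneg
      (fun k => mul_nonneg (Nat.cast_nonneg _) (hp_nn _)) hq
  have h₀ : HasSum (fun n => coeff n (rescale q (mk p))) q := by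
    have h := hasSum_coeff_rescale_mk (hsum.mul_pow_of_nonneg hp_nn hq)
    rwa [← hf, hq_fix] at h
  have h₁ : HasSum (fun n => coeff n (eulerDeriv (rescale q (mk p)))) (q * β) := by
    have h := hasSum_coeff_eulerDeriv_rescale_mk hf'_sum
    rwa [← hf', ← hβ] at h
  have h₂ : HasSum (fun n => coeff n (eulerDeriv (eulerDeriv (rescale q (mk p)))))
      (q * (bq + β)) := by
    convert hasSum_coeff_eulerDeriv_eulerDeriv_rescale_mk hf'_sum hbq_fin using 1
    rw [hbq, hβ, hf', hf'']; ring
  have hPcoeff :=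
    coeff_mk_pow_eq_of_tsum_pow_eq hp_nn hsum hp0 hP_nn fun i s hs => hf s ▸ hP i s hs
  have hbq_nonneg : 0 ≤ bq := hbq ▸ hf'' q ▸ mul_nonneg hq.1 (tsum_nonneg fun k => by
    have := hp_nn (k + 2); have := pow_nonneg hq.1 k; positivity)
  intro n
  rw [integral_qProcess hW_meas hW_pos hP_nn hq.1 hβ_pos.le hW_fdd (c := 1 - β + bq / β)
    (by have := div_nonneg hbq_nonneg hβ_pos.le; linarith)
    (fun a ha => hasSum_mul_qTransition hp_nn hq_mem.1 hβ_pos h₀ h₁ h₂ hPcoeff ha),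
    geom_sum_eq hβ_lt.ne, hγq]
  have h1 : β - 1 ≠ 0 := sub_ne_zero.2 hβ_lt.ne
  have h2 : 1 - β ≠ 0 := sub_ne_zero.2 hβ_lt.ne'
  field_simp
  ring

theorem expected_Q_process
    (p : ℕ → ℝ) (hp_nn : ∀ k, 0 ≤ p k) (hp_sum : ∑' k, p k = 1)
    (hp0 : 0 < p 0) (hp01 : p 0 + p 1 < 1)
    (f f' f'' : ℝ → ℝ)
    (hf : ∀ s, f s = ∑' k, p k * s ^ k)
    (hf' : ∀ s, f' s = ∑' k : ℕ, ((k : ℝ) + 1) * p (k + 1) * s ^ k)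
    (hf'' : ∀ s, f'' s = ∑' k : ℕ, ((k : ℝ) + 2) * ((k : ℝ) + 1) * p (k + 2) * s ^ k)
    (hm : Summable fun k : ℕ => (k : ℝ) * p k)
    (q : ℝ) (hq_mem : q ∈ Set.Ioc (0 : ℝ) 1) (hq_fix : f q = q)
    (hq_min : ∀ t ∈ Set.Ioc (0 : ℝ) 1, f t = t → q ≤ t)
    (β : ℝ) (hβ : β = f' q) (hβ_pos : 0 < β) (hβ_lt : β < 1)
    (bq : ℝ) (hbq : bq = q * f'' q)
    (hbq_fin : Summable fun k : ℕ => ((k : ℝ) + 2) * ((k : ℝ) + 1) * p (k + 2) * q ^ k)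
    (γq : ℝ) (hγq : γq = bq / (β * (1 - β)))
    (P : ℕ → ℕ → ℝ) (hP_nn : ∀ i j, 0 ≤ P i j)
    (hP : ∀ i : ℕ, ∀ s ∈ Set.Ico (0 : ℝ) 1, (f s) ^ i = ∑' j, P i j * s ^ j)
    (Ω : Type*) [MeasurableSpace Ω] (μ : Measure Ω) [IsProbabilityMeasure μ]
    (W : ℕ → Ω → ℕ) (hW_meas : ∀ n, Measurable (W n))
    (hW_pos : ∀ n ω, 1 ≤ W n ω)
    (hW_fdd : ∀ n : ℕ, ∀ i : ℕ → ℕ, (∀ k, k ≤ n → 1 ≤ i k) →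
      μ {ω | ∀ k, k ≤ n → W k ω = i k} =
        ENNReal.ofReal ((if i 0 = 1 then (1 : ℝ) else 0) *
          ∏ k ∈ Finset.range n,
            (i (k + 1) : ℝ) * q ^ ((i (k + 1) : ℤ) - (i k : ℤ)) / ((i k : ℝ) * β)
              * P (i k) (i (k + 1)))) :
    ∀ n : ℕ, ∫ ω, (W n ω : ℝ) ∂μ = 1 + γq * (1 - β ^ n) :=
  expected_Q_process_general p hp_nn hp_sum hp0 f f' f'' hf hf' hf'' hm q hq_mem hq_fix β hβ hβ_pos
    hβ_lt bq hbq hbq_fin γq hγq P hP_nn hP Ω μ W hW_meas hW_pos hW_fdd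
end

section
/- Define g_0 := 0 and g_{n+1} := f_q(g_n), so that 1 − g_n is the survival probability at time n of the subcritical Galton–Watson process with offspring generating function f_q. Then for every n ≥ 0 and all s, x ∈ [0,1], |R_n(s;x)| ≤ 1 − g_n; in particular sup_{s,x ∈ [0,1]} |R_n(s;x)| → 0 as n → ∞. -/
open Filter Topology

private lemma pow_sub_le_aux {a b b' : ℝ} (hb0 : 0 ≤ b) (hba : b ≤ a) (ha1 : a ≤ 1)
    (hbb' : b ≤ b') (hb'1 : b' ≤ 1) (hgap : a - b ≤ 1 - b') (k : ℕ) :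
    a ^ k - b ^ k ≤ 1 - b' ^ k := by
  have hb'0 : 0 ≤ b' := hb0.trans hbb'
  have ha0 : 0 ≤ a := hb0.trans hba
  have e1 : a ^ k - b ^ k = (∑ i ∈ Finset.range k, a ^ i * b ^ (k - 1 - i)) * (a - b) :=
    (geom_sum₂_mul a b k).symm
  have e2 : 1 - b' ^ k = (∑ i ∈ Finset.range k, b' ^ i) * (1 - b') := by
    have h := geom_sum_mul b' k
    ring_nf at h ⊢
    linarith
  have hsum_le : (∑ i ∈ Finset.range k, a ^ i * b ^ (k - 1 - i))
      ≤ ∑ i ∈ Finset.range k, b' ^ i := by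
    rw [← Finset.sum_range_reflect (fun i => b' ^ i) k]
    refine Finset.sum_le_sum fun i _ => ?_
    calc a ^ i * b ^ (k - 1 - i) ≤ 1 * b' ^ (k - 1 - i) :=
          mul_le_mul (pow_le_one₀ ha0 ha1) (pow_le_pow_left₀ hb0 hbb' _)
            (pow_nonneg hb0 _) zero_le_one
      _ = b' ^ (k - 1 - i) := one_mul _
  rw [e1, e2]
  exact mul_le_mul hsum_le hgap (by linarith) (Finset.sum_nonneg fun i _ => pow_nonneg hb'0 i)

private lemma one_sub_pow_le_aux {t : ℝ} (ht0 : 0 ≤ t) (ht1 : t ≤ 1) (k : ℕ) :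
    1 - t ^ k ≤ (k : ℝ) * (1 - t) := by
  have h := geom_sum_mul t k
  have hs : (∑ i ∈ Finset.range k, t ^ i) ≤ (k : ℝ) := by
    calc (∑ i ∈ Finset.range k, t ^ i) ≤ ∑ _i ∈ Finset.range k, (1 : ℝ) :=
          Finset.sum_le_sum fun i _ => pow_le_one₀ ht0 ht1
      _ = (k : ℝ) := by simp
  have h2 := mul_le_mul_of_nonneg_right hs (by linarith : (0:ℝ) ≤ 1 - t)
  ring_nf at h h2 ⊢
  linarith

/- Setup: `fq` is the probability generating function of a subcritical offspring law `π`
(with derivative functions `fq'`, `fq''` given by the differentiated power series, so that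
`fq' 1`, `fq'' 1` are the left limits at `1`), mean `β = fq'(1-) ∈ (0,1)`, finite
`b_q = fq''(1-)`, `γ_q = b_q/(β(1-β))`; `H` is the recursively defined two-variable
generating function `H 0 s x = s`, `H (n+1) s x = x · fq (H n s x)` (so `h_n x = H n 1 x`),
and `h x = lim_n H n 1 x` is the total-progeny generating function, satisfying
`h x = x · fq (h x)` and `h 1 = 1`. -/
set_option maxHeartbeats 1000000 in
theorem R_uniform_bound
    (π : ℕ → ℝ) (hπ_nn : ∀ k, 0 ≤ π k) (hπ_sum : ∑' k, π k = 1)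
    (hπ0 : 0 < π 0) (hπ01 : π 0 + π 1 < 1)
    (fq fq' fq'' : ℝ → ℝ)
    (hfq : ∀ s, fq s = ∑' k, π k * s ^ k)
    (hfq' : ∀ s, fq' s = ∑' k : ℕ, ((k : ℝ) + 1) * π (k + 1) * s ^ k)
    (hfq'' : ∀ s, fq'' s = ∑' k : ℕ, ((k : ℝ) + 2) * ((k : ℝ) + 1) * π (k + 2) * s ^ k)
    (β : ℝ) (hβ : β = fq' 1) (hβ_pos : 0 < β) (hβ_lt : β < 1)
    (bq : ℝ) (hbq : bq = fq'' 1)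
    (hbq_fin : Summable fun k : ℕ => ((k : ℝ) + 2) * ((k : ℝ) + 1) * π (k + 2))
    (γq : ℝ) (hγq : γq = bq / (β * (1 - β)))
    (H : ℕ → ℝ → ℝ → ℝ)
    (hH0 : ∀ s x : ℝ, H 0 s x = s)
    (hHrec : ∀ (n : ℕ) (s x : ℝ), H (n + 1) s x = x * fq (H n s x))
    (h : ℝ → ℝ)
    (hh_lim : ∀ x ∈ Set.Icc (0 : ℝ) 1, Tendsto (fun n => H n 1 x) atTop (𝓝 (h x)))
    (hh_fix : ∀ x ∈ Set.Icc (0 : ℝ) 1, h x = x * fq (h x))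
    (hh_one : h 1 = 1)
    (g : ℕ → ℝ) (hg0 : g 0 = 0) (hgrec : ∀ n : ℕ, g (n + 1) = fq (g n)) :
    (∀ n : ℕ, ∀ s ∈ Set.Icc (0 : ℝ) 1, ∀ x ∈ Set.Icc (0 : ℝ) 1,
        |h x - H n s x| ≤ 1 - g n) ∧
      Tendsto (fun n => ⨆ s ∈ Set.Icc (0 : ℝ) 1, ⨆ x ∈ Set.Icc (0 : ℝ) 1, |h x - H n s x|)
        atTop (𝓝 0) := by
  -- Basic summability facts
  have hπS : Summable π := by
    by_contra hs
    rw [tsum_eq_zero_of_not_summable hs] at hπ_sum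
    norm_num at hπ_sum
  have hsumpow : ∀ t : ℝ, 0 ≤ t → t ≤ 1 → Summable (fun k => π k * t ^ k) := by
    intro t ht0 ht1
    refine hπS.of_nonneg_of_le (fun k => mul_nonneg (hπ_nn k) (pow_nonneg ht0 k)) (fun k => ?_)
    exact mul_le_of_le_one_right (hπ_nn k) (pow_le_one₀ ht0 ht1)
  -- fq basics
  have hfq1 : fq 1 = 1 := by
    rw [hfq]; simpa using hπ_sum
  have hfq_nonneg : ∀ t : ℝ, 0 ≤ t → 0 ≤ fq t := by
    intro t ht0
    rw [hfq]
    exact tsum_nonneg fun k => mul_nonneg (hπ_nn k) (pow_nonneg ht0 k)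
  have hfq_mono : ∀ a b : ℝ, 0 ≤ a → a ≤ b → b ≤ 1 → fq a ≤ fq b := by
    intro a b ha0 hab hb1
    rw [hfq, hfq]
    exact Summable.tsum_le_tsum (fun k => mul_le_mul_of_nonneg_left (pow_le_pow_left₀ ha0 hab k) (hπ_nn k))
      (hsumpow a ha0 (hab.trans hb1)) (hsumpow b (ha0.trans hab) hb1)
  have hfq_le1 : ∀ t : ℝ, 0 ≤ t → t ≤ 1 → fq t ≤ 1 := by
    intro t ht0 ht1
    rw [← hfq1]; exact hfq_mono t 1 ht0 ht1 le_rfl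
  -- key inequality A
  have keyA : ∀ a b b' : ℝ, 0 ≤ b → b ≤ a → a ≤ 1 → b ≤ b' → b' ≤ 1 → a - b ≤ 1 - b' →
      fq a - fq b ≤ 1 - fq b' := by
    intro a b b' hb0 hba ha1 hbb' hb'1 hgap
    have hb'0 : 0 ≤ b' := hb0.trans hbb'
    have ha0 : 0 ≤ b := hb0
    have Sa := hsumpow a (hb0.trans hba) ha1
    have Sb := hsumpow b hb0 (hba.trans ha1)
    have Sb' := hsumpow b' hb'0 hb'1
    have S1 := hsumpow 1 zero_le_one le_rfl
    have h1eq : (1 : ℝ) = fq 1 := hfq1.symm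
    rw [h1eq, hfq a, hfq b, hfq 1, hfq b', ← Summable.tsum_sub Sa Sb, ← Summable.tsum_sub S1 Sb']
    refine Summable.tsum_le_tsum (fun k => ?_) (Sa.sub Sb) (S1.sub Sb')
    have hk := pow_sub_le_aux hb0 hba ha1 hbb' hb'1 hgap k
    have hπk := hπ_nn k
    simp only [one_pow]
    nlinarith
  -- summability for the mean series
  have S2 : Summable (fun k : ℕ => ((k : ℝ) + 2) * π (k + 2)) := by
    refine hbq_fin.of_nonneg_of_le
      (fun k => mul_nonneg (by positivity) (hπ_nn _)) (fun k => ?_)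
    nlinarith [mul_nonneg (mul_nonneg (by positivity : (0:ℝ) ≤ (k:ℝ) + 2)
      (Nat.cast_nonneg (α := ℝ) k)) (hπ_nn (k + 2))]
  have Sβ : Summable (fun k : ℕ => ((k : ℝ) + 1) * π (k + 1)) := by
    have hsh : Summable (fun n : ℕ => ((((n : ℕ) + 1 : ℕ) : ℝ) + 1) * π ((n + 1) + 1)) := by
      refine S2.congr fun n => ?_
      push_cast; ring_nf
    exact (summable_nat_add_iff 1).mp hsh
  have hβ_val : β = ∑' k : ℕ, ((k : ℝ) + 1) * π (k + 1) := by
    rw [hβ, hfq' 1]; simp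
  -- key inequality C : 1 - fq t ≤ β (1 - t)
  have keyC : ∀ t : ℝ, 0 ≤ t → t ≤ 1 → 1 - fq t ≤ β * (1 - t) := by
    intro t ht0 ht1
    have St := hsumpow t ht0 ht1
    have hdiff : Summable (fun k : ℕ => π k - π k * t ^ k) := hπS.sub St
    have e1 : 1 - fq t = ∑' k : ℕ, (π k - π k * t ^ k) := by
      rw [hfq, Summable.tsum_sub hπS St, hπ_sum]
    have e2 : (∑' k : ℕ, (π k - π k * t ^ k))
        = (π 0 - π 0 * t ^ 0) + ∑' k : ℕ, (π (k + 1) - π (k + 1) * t ^ (k + 1)) :=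
      Summable.tsum_eq_zero_add hdiff
    have e3 : β * (1 - t) = ∑' k : ℕ, ((k : ℝ) + 1) * π (k + 1) * (1 - t) := by
      rw [hβ_val, ← tsum_mul_right]
    rw [e1, e2, e3]
    have h0 : π 0 - π 0 * t ^ 0 = 0 := by simp
    rw [h0, zero_add]
    refine Summable.tsum_le_tsum (fun k => ?_) ((summable_nat_add_iff 1).mpr hdiff)
      (Sβ.mul_right (1 - t))
    have hber := one_sub_pow_le_aux ht0 ht1 (k + 1)
    have hπk := hπ_nn (k + 1)
    push_cast at hber ⊢
    nlinarith
  -- H basics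
  have hHmem : ∀ n : ℕ, ∀ s ∈ Set.Icc (0:ℝ) 1, ∀ x ∈ Set.Icc (0:ℝ) 1,
      H n s x ∈ Set.Icc (0:ℝ) 1 := by
    intro n
    induction n with
    | zero => intro s hs x hx; rw [hH0]; exact hs
    | succ n ih =>
      intro s hs x hx
      have hm := ih s hs x hx
      rw [hHrec]
      constructor
      · exact mul_nonneg hx.1 (hfq_nonneg _ hm.1)
      · exact mul_le_one₀ hx.2 (hfq_nonneg _ hm.1) (hfq_le1 _ hm.1 hm.2)
  have hHs_mono : ∀ n : ℕ, ∀ x ∈ Set.Icc (0:ℝ) 1, ∀ s s' : ℝ, 0 ≤ s → s ≤ s' → s' ≤ 1 →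
      H n s x ≤ H n s' x := by
    intro n
    induction n with
    | zero => intro x hx s s' _ hss' _; rw [hH0, hH0]; exact hss'
    | succ n ih =>
      intro x hx s s' hs0 hss' hs'1
      rw [hHrec, hHrec]
      refine mul_le_mul_of_nonneg_left ?_ hx.1
      have h1 := hHmem n s ⟨hs0, hss'.trans hs'1⟩ x hx
      have h2 := hHmem n s' ⟨hs0.trans hss', hs'1⟩ x hx
      exact hfq_mono _ _ h1.1 (ih x hx s s' hs0 hss' hs'1) h2.2
  have hH0x_mono : ∀ n : ℕ, ∀ x x' : ℝ, 0 ≤ x → x ≤ x' → x' ≤ 1 →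
      H n 0 x ≤ H n 0 x' := by
    intro n
    induction n with
    | zero => intro x x' _ _ _; rw [hH0, hH0]
    | succ n ih =>
      intro x x' hx0 hxx' hx'1
      rw [hHrec, hHrec]
      have h1 := hHmem n 0 ⟨le_rfl, zero_le_one⟩ x ⟨hx0, hxx'.trans hx'1⟩
      have h2 := hHmem n 0 ⟨le_rfl, zero_le_one⟩ x' ⟨hx0.trans hxx', hx'1⟩
      exact mul_le_mul hxx' (hfq_mono _ _ h1.1 (ih x x' hx0 hxx' hx'1) h2.2)
        (hfq_nonneg _ h1.1) (hx0.trans hxx')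
  have hg_eq : ∀ n : ℕ, g n = H n 0 1 := by
    intro n
    induction n with
    | zero => rw [hg0, hH0]
    | succ n ih => rw [hgrec, ih, hHrec, one_mul]
  have hg_mem : ∀ n : ℕ, g n ∈ Set.Icc (0:ℝ) 1 := by
    intro n
    rw [hg_eq]
    exact hHmem n 0 ⟨le_rfl, zero_le_one⟩ 1 ⟨zero_le_one, le_rfl⟩
  -- antitonicity of n ↦ H n 1 x
  have hanti : ∀ x ∈ Set.Icc (0:ℝ) 1, ∀ n : ℕ, H (n + 1) 1 x ≤ H n 1 x := by
    intro x hx n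
    induction n with
    | zero =>
      rw [hHrec, hH0, hfq1, mul_one]; exact hx.2
    | succ n ih =>
      have h1 := hHmem (n + 1) 1 ⟨zero_le_one, le_rfl⟩ x hx
      have h2 := hHmem n 1 ⟨zero_le_one, le_rfl⟩ x hx
      calc H (n + 1 + 1) 1 x = x * fq (H (n + 1) 1 x) := hHrec (n + 1) 1 x
        _ ≤ x * fq (H n 1 x) :=
            mul_le_mul_of_nonneg_left (hfq_mono _ _ h1.1 ih h2.2) hx.1
        _ = H (n + 1) 1 x := (hHrec n 1 x).symm
  have hH1_anti : ∀ x ∈ Set.Icc (0:ℝ) 1, Antitone (fun n => H n 1 x) := by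
    intro x hx
    exact antitone_nat_of_succ_le (hanti x hx)
  -- monotonicity of n ↦ H n 0 x
  have hmono0' : ∀ x ∈ Set.Icc (0:ℝ) 1, ∀ n : ℕ, H n 0 x ≤ H (n + 1) 0 x := by
    intro x hx n
    induction n with
    | zero =>
      rw [hH0, hHrec, hH0]
      exact mul_nonneg hx.1 (hfq_nonneg 0 le_rfl)
    | succ n ih =>
      have h1 := hHmem n 0 ⟨le_rfl, zero_le_one⟩ x hx
      have h2 := hHmem (n + 1) 0 ⟨le_rfl, zero_le_one⟩ x hx
      calc H (n + 1) 0 x = x * fq (H n 0 x) := hHrec n 0 x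
        _ ≤ x * fq (H (n + 1) 0 x) :=
            mul_le_mul_of_nonneg_left (hfq_mono _ _ h1.1 ih h2.2) hx.1
        _ = H (n + 1 + 1) 0 x := (hHrec (n + 1) 0 x).symm
  have hmono0 : ∀ x ∈ Set.Icc (0:ℝ) 1, Monotone (fun n => H n 0 x) := by
    intro x hx
    exact monotone_nat_of_le_succ (hmono0' x hx)
  -- h x between H n 0 x and H n 1 x
  have h_le : ∀ x ∈ Set.Icc (0:ℝ) 1, ∀ n : ℕ, h x ≤ H n 1 x := by
    intro x hx n
    refine le_of_tendsto (hh_lim x hx) ?_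
    filter_upwards [eventually_ge_atTop n] with m hm
    exact hH1_anti x hx hm
  have h_ge : ∀ x ∈ Set.Icc (0:ℝ) 1, ∀ n : ℕ, H n 0 x ≤ h x := by
    intro x hx n
    refine ge_of_tendsto (hh_lim x hx) ?_
    filter_upwards [eventually_ge_atTop n] with m hm
    exact (hmono0 x hx hm).trans (hHs_mono m x hx 0 1 le_rfl zero_le_one le_rfl)
  -- Claim: H n 1 x - H n 0 x ≤ 1 - g n
  have claimC : ∀ n : ℕ, ∀ x ∈ Set.Icc (0:ℝ) 1, H n 1 x - H n 0 x ≤ 1 - g n := by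
    intro n
    induction n with
    | zero =>
      intro x hx
      rw [hH0, hH0, hg0]
    | succ n ih =>
      intro x hx
      have hb := hHmem n 0 ⟨le_rfl, zero_le_one⟩ x hx
      have ha := hHmem n 1 ⟨zero_le_one, le_rfl⟩ x hx
      have hba : H n 0 x ≤ H n 1 x := hHs_mono n x hx 0 1 le_rfl zero_le_one le_rfl
      have hbg : H n 0 x ≤ g n := by
        rw [hg_eq]
        exact hH0x_mono n x 1 hx.1 hx.2 le_rfl
      have hA := keyA (H n 1 x) (H n 0 x) (g n) hb.1 hba ha.2 hbg (hg_mem n).2 (ih x hx)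
      rw [hHrec, hHrec, hgrec]
      have hfm : fq (H n 0 x) ≤ fq (H n 1 x) := hfq_mono _ _ hb.1 hba ha.2
      have hx1 := mul_le_of_le_one_left (sub_nonneg.mpr hfm) hx.2
      have hexp : x * (fq (H n 1 x) - fq (H n 0 x))
          = x * fq (H n 1 x) - x * fq (H n 0 x) := by ring
      rw [hexp] at hx1
      linarith
  have hg_le1 : ∀ n, 1 - g n ≤ β ^ n := by
    intro n
    induction n with
    | zero => rw [hg0]; norm_num
    | succ n ih =>
      have hC := keyC (g n) (hg_mem n).1 (hg_mem n).2
      rw [hgrec, pow_succ]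
      calc 1 - fq (g n) ≤ β * (1 - g n) := hC
        _ ≤ β * β ^ n := mul_le_mul_of_nonneg_left ih hβ_pos.le
        _ = β ^ n * β := mul_comm _ _
  -- Main bound
  have main : ∀ n : ℕ, ∀ s ∈ Set.Icc (0:ℝ) 1, ∀ x ∈ Set.Icc (0:ℝ) 1,
      |h x - H n s x| ≤ 1 - g n := by
    intro n s hs x hx
    have h1 : H n s x ≤ H n 1 x := hHs_mono n x hx s 1 hs.1 hs.2 le_rfl
    have h2 : H n 0 x ≤ H n s x := hHs_mono n x hx 0 s le_rfl hs.1 hs.2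
    have h3 := h_le x hx n
    have h4 := h_ge x hx n
    have h5 := claimC n x hx
    rw [abs_le]
    constructor <;> linarith
  refine ⟨main, ?_⟩
  have hsup_nonneg : ∀ n : ℕ,
      0 ≤ ⨆ s ∈ Set.Icc (0:ℝ) 1, ⨆ x ∈ Set.Icc (0:ℝ) 1, |h x - H n s x| := by
    intro n
    refine Real.iSup_nonneg fun s => Real.iSup_nonneg fun hs => ?_
    exact Real.iSup_nonneg fun x => Real.iSup_nonneg fun hx => abs_nonneg _
  have hsup_le : ∀ n : ℕ,
      (⨆ s ∈ Set.Icc (0:ℝ) 1, ⨆ x ∈ Set.Icc (0:ℝ) 1, |h x - H n s x|) ≤ β ^ n := by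
    intro n
    have hβn : (0:ℝ) ≤ β ^ n := pow_nonneg hβ_pos.le n
    refine Real.iSup_le (fun s => Real.iSup_le (fun hs => Real.iSup_le (fun x =>
      Real.iSup_le (fun hx => ?_) hβn) hβn) hβn) hβn
    exact (main n s hs x hx).trans (hg_le1 n)
  exact squeeze_zero hsup_nonneg hsup_le
    (tendsto_pow_atTop_nhds_zero_of_lt_one hβ_pos.le hβ_lt)
end

section
/- (Lemma 5) For each fixed integer n ≥ 1, as θ ↑ 0 (θ real and negative, so that e^θ ∈ (0,1)), the quantity (Δ_n(e^θ)/u(e^θ)^n − θ/(1−β))/θ² converges to a finite limit; that is, Δ_n(e^θ)/u(e^θ)^n = θ/(1−β) + O*(θ²) as θ ↑ 0. -/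
/-!
Write `x = e^θ`, `D(θ) = h(e^θ) - hₙ(e^θ)`, `U(θ) = u(e^θ)ⁿ`, and let `θ → 0⁻`.
Since `s ↦ x f(s)` is a `β`-contraction of `[0, 1]`, `h` is Lipschitz, and implicit
differentiation of `h = x f(h)` gives `h' = f(h) / (1 - u)`. Together with
`hₙ₊₁' = f(hₙ) + x f'(hₙ) hₙ'` and the continuity of `f`, `f'`, `f''` on `[0, 1]`, this shows that
`D` has one-sided derivatives of order two with limits at `0⁻`, whereas `U`, which involves
`f'(h)`, only has first-order ones. Moreover `D(0⁻) = 0` and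
`D'(0⁻) = βⁿ / (1 - β) = U(0⁻) / (1 - β)`. L'Hôpital's rule applied to `G = D' - U / (1 - β)`
gives a limit for `G / θ`, hence for `F' / θ = G / θ - U' / (1 - β)` where
`F = D - θ U / (1 - β)`; applied once more it gives one for `F / θ²`, and the second derivative
of `U` is never needed.
-/

open Filter Topology Set

def LeftJet (x₀ : ℝ) (g g' : ℝ → ℝ) (a a' : ℝ) : Prop :=
  (∀ᶠ x in 𝓝[<] x₀, HasDerivAt g (g' x) x) ∧ Tendsto g (𝓝[<] x₀) (𝓝 a) ∧
    Tendsto g' (𝓝[<] x₀) (𝓝 a')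

namespace LeftJet

variable {x₀ y₀ a a' b b' : ℝ} {f f' g g' : ℝ → ℝ}

theorem const (x₀ c : ℝ) : LeftJet x₀ (fun _ => c) (fun _ => 0) c 0 :=
  ⟨.of_forall fun x => hasDerivAt_const x c, tendsto_const_nhds, tendsto_const_nhds⟩

theorem add (hf : LeftJet x₀ f f' a a') (hg : LeftJet x₀ g g' b b') :
    LeftJet x₀ (fun x => f x + g x) (fun x => f' x + g' x) (a + b) (a' + b') :=
  ⟨hf.1.and hg.1 |>.mono fun _ h => h.1.add h.2, hf.2.1.add hg.2.1, hf.2.2.add hg.2.2⟩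

theorem sub (hf : LeftJet x₀ f f' a a') (hg : LeftJet x₀ g g' b b') :
    LeftJet x₀ (fun x => f x - g x) (fun x => f' x - g' x) (a - b) (a' - b') :=
  ⟨hf.1.and hg.1 |>.mono fun _ h => h.1.sub h.2, hf.2.1.sub hg.2.1, hf.2.2.sub hg.2.2⟩

theorem mul (hf : LeftJet x₀ f f' a a') (hg : LeftJet x₀ g g' b b') :
    LeftJet x₀ (fun x => f x * g x) (fun x => f' x * g x + f x * g' x) (a * b)
      (a' * b + a * b') :=
  ⟨hf.1.and hg.1 |>.mono fun _ h => h.1.mul h.2, hf.2.1.mul hg.2.1,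
    (hf.2.2.mul hg.2.1).add (hf.2.1.mul hg.2.2)⟩

theorem div_const (hf : LeftJet x₀ f f' a a') (m : ℝ) :
    LeftJet x₀ (fun x => f x / m) (fun x => f' x / m) (a / m) (a' / m) :=
  ⟨hf.1.mono fun _ h => h.div_const m, hf.2.1.div_const m, hf.2.2.div_const m⟩

theorem div (hf : LeftJet x₀ f f' a a') (hg : LeftJet x₀ g g' b b') (hb : b ≠ 0) :
    LeftJet x₀ (fun x => f x / g x) (fun x => (f' x * g x - f x * g' x) / g x ^ 2) (a / b)
      ((a' * b - a * b') / b ^ 2) :=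
  ⟨hf.1.and (hg.1.and (hg.2.1.eventually_ne hb)) |>.mono fun _ h => h.1.fun_div h.2.1 h.2.2,
    hf.2.1.div hg.2.1 hb,
    ((hf.2.2.mul hg.2.1).sub (hf.2.1.mul hg.2.2)).div (hg.2.1.pow 2) (pow_ne_zero 2 hb)⟩

theorem pow (hf : LeftJet x₀ f f' a a') (n : ℕ) :
    LeftJet x₀ (fun x => f x ^ n) (fun x => n * f x ^ (n - 1) * f' x) (a ^ n)
      (n * a ^ (n - 1) * a') :=
  ⟨hf.1.mono fun _ h => h.fun_pow n, hf.2.1.pow n,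
    ((hf.2.1.pow (n - 1)).const_mul (n : ℝ)).mul hf.2.2⟩

theorem comp {F F' : ℝ → ℝ} {A A' : ℝ} (hF : LeftJet y₀ F F' A A') (hg : LeftJet x₀ g g' y₀ b)
    (hlt : ∀ᶠ x in 𝓝[<] x₀, g x < y₀) :
    LeftJet x₀ (fun x => F (g x)) (fun x => F' (g x) * g' x) A (A' * b) := by
  have hg_lt : Tendsto g (𝓝[<] x₀) (𝓝[<] y₀) := tendsto_nhdsWithin_iff.2 ⟨hg.2.1, hlt⟩
  exact ⟨(hg_lt.eventually hF.1).and hg.1 |>.mono fun x h => h.1.comp x h.2,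
    hF.2.1.comp hg_lt, (hF.2.2.comp hg_lt).mul hg.2.2⟩

theorem tendsto_div_self (hg : LeftJet 0 g g' 0 b) :
    Tendsto (fun x => g x / x) (𝓝[<] 0) (𝓝 b) :=
  HasDerivAt.lhopital_zero_nhdsLT hg.1 (.of_forall hasDerivAt_id)
    (.of_forall fun _ => one_ne_zero) hg.2.1 (tendsto_id.mono_left nhdsWithin_le_nhds)
    (by simpa using hg.2.2)

end LeftJet

theorem leftJet_exp : LeftJet 0 Real.exp Real.exp 1 1 := by
  have h : Tendsto Real.exp (𝓝[<] 0) (𝓝 1) :=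
    (Real.continuous_exp.tendsto' 0 1 Real.exp_zero).mono_left nhdsWithin_le_nhds
  exact ⟨.of_forall Real.hasDerivAt_exp, h, h⟩

theorem tendsto_div_sq_of_hasDerivAt {F F' : ℝ → ℝ} {L : ℝ}
    (hF : ∀ᶠ x in 𝓝[<] 0, HasDerivAt F (F' x) x) (hF0 : Tendsto F (𝓝[<] 0) (𝓝 0))
    (hF' : Tendsto (fun x => F' x / x) (𝓝[<] 0) (𝓝 L)) :
    Tendsto (fun x => F x / x ^ 2) (𝓝[<] 0) (𝓝 (L / 2)) := by
  refine HasDerivAt.lhopital_zero_nhdsLT hF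
    (.of_forall fun x => by simpa using hasDerivAt_pow 2 x) ?_ hF0 ?_ ?_
  · filter_upwards [self_mem_nhdsWithin] with x (hx : x < 0)
    linarith
  · exact ((continuous_pow 2).tendsto' (0 : ℝ) 0 (by norm_num)).mono_left nhdsWithin_le_nhds
  · refine (hF'.div_const 2).congr fun x => ?_
    rw [div_div, mul_comm]

theorem LeftJet.tendsto_div_sub_div_sq {D D' D'' U U' : ℝ → ℝ} {B m c e : ℝ}
    (hD : LeftJet 0 D D' 0 (B / m)) (hD' : LeftJet 0 D' D'' (B / m) c)
    (hU : LeftJet 0 U U' B e) (hB : B ≠ 0) :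
    Tendsto (fun x => (D x / U x - x / m) / x ^ 2) (𝓝[<] 0)
      (𝓝 ((c - e / m - e / m) / 2 / B)) := by
  have hG : Tendsto (fun x => (D' x - U x / m) / x) (𝓝[<] 0) (𝓝 (c - e / m)) := by
    have hjet := hD'.sub (hU.div_const m)
    rw [sub_self] at hjet
    exact hjet.tendsto_div_self
  have hid : Tendsto (fun x : ℝ => x) (𝓝[<] 0) (𝓝 0) := tendsto_id.mono_left nhdsWithin_le_nhds
  have hF : Tendsto (fun x => (D x - x * U x / m) / x ^ 2) (𝓝[<] 0)
      (𝓝 ((c - e / m - e / m) / 2)) := by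
    refine tendsto_div_sq_of_hasDerivAt (F' := fun x => D' x - (1 * U x + x * U' x) / m)
      (hD.1.and hU.1 |>.mono fun x h => h.1.sub (((hasDerivAt_id x).mul h.2).div_const m))
      (by simpa using hD.2.1.sub ((hid.mul hU.2.1).div_const m)) ?_
    refine (hG.sub (hU.2.2.div_const m)).congr' ?_
    filter_upwards [self_mem_nhdsWithin] with x (hx : x < 0)
    field_simp [hx.ne]
    ring
  refine (hF.div hU.2.1 hB).congr' ?_
  filter_upwards [hU.2.1.eventually_ne hB, self_mem_nhdsWithin] with x hUx (hx : x < 0)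
  rw [Pi.div_apply]
  field_simp [hx.ne]

section PowerSeries

variable {c : ℕ → ℝ}

theorem norm_mul_pow_le_abs {s : ℝ} (hs : |s| ≤ 1) (k : ℕ) : ‖c k * s ^ k‖ ≤ |c k| := by
  rw [norm_mul, norm_pow, Real.norm_eq_abs, Real.norm_eq_abs]
  exact mul_le_of_le_one_right (abs_nonneg _) (pow_le_one₀ (abs_nonneg _) hs)

theorem summable_mul_pow (hc : Summable c) {s : ℝ} (hs : |s| ≤ 1) :
    Summable fun k => c k * s ^ k :=
  .of_norm_bounded hc.abs (norm_mul_pow_le_abs hs)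

theorem continuousOn_tsum_mul_pow (hc : Summable c) :
    ContinuousOn (fun s => ∑' k, c k * s ^ k) (Icc (-1) 1) :=
  continuousOn_tsum (fun k => (continuous_const.mul (continuous_pow k)).continuousOn) hc.abs
    fun k _ hs => norm_mul_pow_le_abs (abs_le.2 hs) k

theorem tendsto_tsum_mul_pow_nhdsLT_one (hc : Summable c) :
    Tendsto (fun s => ∑' k, c k * s ^ k) (𝓝[<] 1) (𝓝 (∑' k, c k * 1 ^ k)) :=
  ((continuousOn_tsum_mul_pow hc 1 ⟨by norm_num, le_rfl⟩).mono_of_mem_nhdsWithin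
    (Icc_mem_nhdsLT (by norm_num))).tendsto

theorem hasDerivAt_tsum_mul_pow (hc : Summable c) {t : ℝ} (ht : |t| < 1) :
    HasDerivAt (fun s => ∑' k, c k * s ^ k) (∑' k : ℕ, ((k : ℝ) + 1) * c (k + 1) * t ^ k) t := by
  obtain ⟨C, hC⟩ := hc.abs.tendsto_atTop_zero.bddAbove_range
  obtain ⟨r, hr, hr1⟩ := exists_between ht
  have hr0 : 0 ≤ r := (abs_nonneg t).trans hr.le
  have hu : Summable fun k : ℕ => C * (((k : ℝ) + 1) * r ^ k) := by
    refine .mul_left C ?_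
    have hr' : ‖r‖ < 1 := by rw [Real.norm_of_nonneg hr0]; exact hr1
    simpa [add_mul] using (summable_pow_mul_geometric_of_norm_lt_one 1 hr').add
      (summable_geometric_of_norm_lt_one hr')
  have hshift : HasDerivAt (fun s => ∑' k, c (k + 1) * s ^ (k + 1))
      (∑' k : ℕ, c (k + 1) * (((k : ℝ) + 1) * t ^ k)) t := by
    refine hasDerivAt_tsum_of_isPreconnected hu isOpen_Ioo isPreconnected_Ioo
      (fun k y _ => by simpa using (hasDerivAt_pow (k + 1) y).const_mul (c (k + 1)))
      (fun k y hy => ?_) (y₀ := 0) ⟨by linarith [abs_nonneg t], by linarith [abs_nonneg t]⟩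
      (by simp) (abs_lt.1 hr)
    have hy' : |y| ≤ r := (abs_lt.2 hy).le
    have hCk : |c (k + 1)| ≤ C := hC ⟨k + 1, rfl⟩
    simp only [norm_mul, norm_pow, Real.norm_eq_abs, abs_of_nonneg (by positivity : (0 : ℝ) ≤ k + 1)]
    exact mul_le_mul hCk (by gcongr) (by positivity) ((abs_nonneg _).trans hCk)
  have hloc : (fun s => ∑' k, c k * s ^ k) =ᶠ[𝓝 t] fun s => c 0 + ∑' k, c (k + 1) * s ^ (k + 1) := by
    filter_upwards [isOpen_Ioo.mem_nhds (abs_lt.1 ht)] with s hs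
    simpa using (summable_mul_pow hc (abs_lt.2 hs).le).tsum_eq_zero_add
  refine ((hshift.const_add (c 0)).congr_of_eventuallyEq hloc).congr_deriv (tsum_congr fun k => ?_)
  ring

theorem tsum_mul_pow_nonneg (hc0 : ∀ k, 0 ≤ c k) {s : ℝ} (hs : 0 ≤ s) :
    0 ≤ ∑' k, c k * s ^ k :=
  tsum_nonneg fun k => mul_nonneg (hc0 k) (pow_nonneg hs k)

theorem tsum_mul_pow_le_tsum_mul_pow (hc0 : ∀ k, 0 ≤ c k) (hc : Summable c) {s t : ℝ}
    (hs : 0 ≤ s) (hst : s ≤ t) (ht : t ≤ 1) : ∑' k, c k * s ^ k ≤ ∑' k, c k * t ^ k :=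
  Summable.tsum_le_tsum (fun k => mul_le_mul_of_nonneg_left (pow_le_pow_left₀ hs hst k) (hc0 k))
    (summable_mul_pow hc (abs_le.2 ⟨by linarith, by linarith⟩))
    (summable_mul_pow hc (abs_le.2 ⟨by linarith, by linarith⟩))

theorem leftJet_one_of_tsum {f f' : ℝ → ℝ} (hc : Summable c)
    (hc' : Summable fun k : ℕ => ((k : ℝ) + 1) * c (k + 1)) (hf : ∀ s, f s = ∑' k, c k * s ^ k)
    (hf' : ∀ s, f' s = ∑' k : ℕ, ((k : ℝ) + 1) * c (k + 1) * s ^ k) :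
    LeftJet 1 f f' (f 1) (f' 1) := by
  obtain rfl : f = _ := funext hf
  obtain rfl : f' = _ := funext hf'
  refine ⟨?_, tendsto_tsum_mul_pow_nhdsLT_one hc, tendsto_tsum_mul_pow_nhdsLT_one hc'⟩
  filter_upwards [Ioo_mem_nhdsLT (show (-1 : ℝ) < 1 by norm_num)] with s hs
  exact hasDerivAt_tsum_mul_pow hc (abs_lt.2 hs)

end PowerSeries

section GeneratingFunction

variable {p : ℕ → ℝ} {f f' : ℝ → ℝ}

theorem summable_succ_mul_of_summable_succ_succ_mul (hp0 : ∀ k, 0 ≤ p k)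
    (hp : Summable fun k : ℕ => ((k : ℝ) + 2) * ((k : ℝ) + 1) * p (k + 2)) :
    Summable fun k : ℕ => ((k : ℝ) + 1) * p (k + 1) := by
  rw [← summable_nat_add_iff 1]
  refine hp.of_nonneg_of_le (fun k => mul_nonneg (by positivity) (hp0 _)) fun k => ?_
  have := hp0 (k + 2)
  calc (((k + 1 : ℕ) : ℝ) + 1) * p (k + 1 + 1) = ((k : ℝ) + 2) * 1 * p (k + 2) := by
        push_cast; ring
    _ ≤ ((k : ℝ) + 2) * ((k : ℝ) + 1) * p (k + 2) := by gcongr; linarith [k.cast_nonneg (α := ℝ)]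

theorem mapsTo_Icc_of_tsum (hp0 : ∀ k, 0 ≤ p k) (hp : Summable p) (hp1 : ∑' k, p k = 1)
    (hf : ∀ s, f s = ∑' k, p k * s ^ k) : MapsTo f (Icc 0 1) (Icc 0 1) := fun s hs => by
  refine ⟨hf s ▸ tsum_mul_pow_nonneg hp0 hs.1, ?_⟩
  calc f s ≤ ∑' k, p k * 1 ^ k := hf s ▸ tsum_mul_pow_le_tsum_mul_pow hp0 hp hs.1 hs.2 le_rfl
    _ = 1 := by simpa using hp1

theorem abs_sub_le_of_tsum (hp0 : ∀ k, 0 ≤ p k) (hp : Summable p)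
    (hp' : Summable fun k : ℕ => ((k : ℝ) + 1) * p (k + 1)) (hf : ∀ s, f s = ∑' k, p k * s ^ k)
    (hf' : ∀ s, f' s = ∑' k : ℕ, ((k : ℝ) + 1) * p (k + 1) * s ^ k) :
    ∀ a ∈ Icc (0 : ℝ) 1, ∀ b ∈ Icc (0 : ℝ) 1, |f a - f b| ≤ f' 1 * |a - b| := by
  have hp0' : ∀ k : ℕ, 0 ≤ ((k : ℝ) + 1) * p (k + 1) := fun k => mul_nonneg (by positivity) (hp0 _)
  have hcont : ContinuousOn f (Icc 0 1) := by
    rw [funext hf]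
    exact (continuousOn_tsum_mul_pow hp).mono (Icc_subset_Icc (by norm_num) le_rfl)
  have hderiv : ∀ x ∈ interior (Icc (0 : ℝ) 1), HasDerivAt f (f' x) x := fun x hx => by
    rw [interior_Icc] at hx
    rw [funext hf, hf']
    exact hasDerivAt_tsum_mul_pow hp (abs_lt.2 ⟨by linarith [hx.1], hx.2⟩)
  have hdiff : DifferentiableOn ℝ f (interior (Icc 0 1)) := fun x hx =>
    (hderiv x hx).differentiableAt.differentiableWithinAt
  have hmono := (convex_Icc (0 : ℝ) 1).mul_sub_le_image_sub_of_le_deriv hcont hdiff (C := 0)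
    fun x hx => (hderiv x hx).deriv ▸ hf' x ▸ tsum_mul_pow_nonneg hp0' (interior_subset hx).1
  have hlip := (convex_Icc (0 : ℝ) 1).image_sub_le_mul_sub_of_deriv_le hcont hdiff (C := f' 1)
    fun x hx => (hderiv x hx).deriv ▸ hf' x ▸ hf' 1 ▸ tsum_mul_pow_le_tsum_mul_pow hp0' hp'
      (interior_subset hx).1 (interior_subset hx).2 le_rfl
  intro a ha b hb
  rcases le_total a b with hab | hba
  · rw [abs_sub_comm, abs_of_nonneg (by linarith [hmono a ha b hb hab]), abs_sub_comm,
      abs_of_nonneg (sub_nonneg.2 hab)]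
    exact hlip a ha b hb hab
  · rw [abs_of_nonneg (by linarith [hmono b hb a ha hba]), abs_of_nonneg (sub_nonneg.2 hba)]
    exact hlip b hb a ha hba

theorem leftJets_one_of_tsum {f'' : ℝ → ℝ} (hp : Summable p)
    (hp' : Summable fun k : ℕ => ((k : ℝ) + 1) * p (k + 1))
    (hp'' : Summable fun k : ℕ => ((k : ℝ) + 2) * ((k : ℝ) + 1) * p (k + 2))
    (hf : ∀ s, f s = ∑' k, p k * s ^ k)
    (hf' : ∀ s, f' s = ∑' k : ℕ, ((k : ℝ) + 1) * p (k + 1) * s ^ k)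
    (hf'' : ∀ s, f'' s = ∑' k : ℕ, ((k : ℝ) + 2) * ((k : ℝ) + 1) * p (k + 2) * s ^ k) :
    LeftJet 1 f f' (f 1) (f' 1) ∧ LeftJet 1 f' f'' (f' 1) (f'' 1) := by
  refine ⟨leftJet_one_of_tsum hp hp' hf hf', leftJet_one_of_tsum hp' (hp''.congr fun k => ?_) hf'
    fun s => (hf'' s).trans (tsum_congr fun k => ?_)⟩ <;> push_cast <;> ring

end GeneratingFunction

theorem eventually_exp_mem_Ioo : ∀ᶠ θ in 𝓝[<] (0 : ℝ), Real.exp θ ∈ Ioo 0 1 :=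
  eventually_nhdsWithin_of_forall fun θ hθ => ⟨Real.exp_pos θ, Real.exp_lt_one_iff.2 hθ⟩

theorem tendsto_exp_nhdsLT_zero : Tendsto Real.exp (𝓝[<] 0) (𝓝[<] 1) :=
  tendsto_nhdsWithin_iff.2 ⟨leftJet_exp.2.1, eventually_exp_mem_Ioo.mono fun _ h => h.2⟩

theorem hasDerivAt_of_eq_mul_comp {F h : ℝ → ℝ} {F' x : ℝ}
    (hfix : ∀ᶠ y in 𝓝 x, h y = y * F (h y)) (hc : ContinuousAt h x)
    (hF : HasDerivAt F F' (h x)) (hF0 : F (h x) ≠ 0) (hxF' : x * F' ≠ 1) :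
    HasDerivAt h (F (h x) / (1 - x * F')) x := by
  -- `t ↦ t / F t` is a local left inverse of `h`
  have hφ := (hasDerivAt_id (h x)).div hF hF0
  have hnum : 1 * F (h x) - id (h x) * F' = F (h x) * (1 - x * F') := by
    rw [id]; linear_combination (-F') * hfix.self_of_nhds
  have hne : 1 - x * F' ≠ 0 := sub_ne_zero.2 hxF'.symm
  refine (HasDerivAt.of_local_left_inverse hc hφ (by rw [hnum]; positivity) ?_).congr_deriv ?_
  · filter_upwards [hfix, (hF.continuousAt.comp hc).eventually_ne hF0] with y hy hy0
    exact (div_eq_iff hy0).2 hy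
  · rw [hnum]
    field_simp

section FixedPointEquation

variable {F F' F'' h : ℝ → ℝ} {β c : ℝ}

theorem continuousOn_of_eq_mul_comp (hF : MapsTo F (Icc 0 1) (Icc 0 1))
    (hlip : ∀ a ∈ Icc (0 : ℝ) 1, ∀ b ∈ Icc (0 : ℝ) 1, |F a - F b| ≤ β * |a - b|) (hβ : β < 1)
    (hh : MapsTo h (Icc 0 1) (Icc 0 1)) (hfix : ∀ x ∈ Icc (0 : ℝ) 1, h x = x * F (h x)) :
    ContinuousOn h (Icc 0 1) := by
  refine (LipschitzOnWith.of_dist_le_mul (K := ⟨(1 - β)⁻¹, inv_nonneg.2 (by linarith)⟩)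
    fun x hx y hy => ?_).continuousOn
  rw [Real.dist_eq, Real.dist_eq]
  show |h x - h y| ≤ (1 - β)⁻¹ * |x - y|
  rw [← div_eq_inv_mul, le_div_iff₀ (by linarith)]
  have hFx := hF (hh hx)
  have key : |h x - h y| ≤ |x - y| + β * |h x - h y| :=
    calc |h x - h y| = |(x - y) * F (h x) + y * (F (h x) - F (h y))| := by
          congr 1; linear_combination hfix x hx - hfix y hy
      _ ≤ |x - y| * |F (h x)| + |y| * |F (h x) - F (h y)| := by
          rw [← abs_mul, ← abs_mul]; exact abs_add_le _ _
      _ ≤ |x - y| * 1 + 1 * (β * |h x - h y|) := by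
          gcongr
          · exact abs_le.2 ⟨by linarith [hFx.1], hFx.2⟩
          · exact abs_le.2 ⟨by linarith [hy.1], hy.2⟩
          · exact hlip _ (hh hx) _ (hh hy)
      _ = |x - y| + β * |h x - h y| := by ring
  linarith

theorem tendsto_comp_exp_of_eq_mul_comp (hF : MapsTo F (Icc 0 1) (Icc 0 1))
    (hlip : ∀ a ∈ Icc (0 : ℝ) 1, ∀ b ∈ Icc (0 : ℝ) 1, |F a - F b| ≤ β * |a - b|) (hβ : β < 1)
    (hh : MapsTo h (Icc 0 1) (Icc 0 1)) (hfix : ∀ x ∈ Icc (0 : ℝ) 1, h x = x * F (h x))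
    (hh1 : h 1 = 1) : Tendsto (fun θ => h (Real.exp θ)) (𝓝[<] 0) (𝓝[<] 1) := by
  have hcont := continuousOn_of_eq_mul_comp hF hlip hβ hh hfix 1 ⟨zero_le_one, le_rfl⟩
  have hlim : Tendsto h (𝓝[<] 1) (𝓝 1) := by
    simpa [hh1] using (hcont.mono_of_mem_nhdsWithin (Icc_mem_nhdsLT zero_lt_one)).tendsto
  refine tendsto_nhdsWithin_iff.2 ⟨hlim.comp tendsto_exp_nhdsLT_zero, ?_⟩
  filter_upwards [eventually_exp_mem_Ioo] with θ hθ
  have hx : Real.exp θ ∈ Icc (0 : ℝ) 1 := Ioo_subset_Icc_self hθ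
  rw [mem_Iio, hfix _ hx]
  exact mul_lt_one_of_nonneg_of_lt_one_left hx.1 hθ.2 (hF (hh hx)).2

theorem leftJet_comp_exp_of_eq_mul_comp (hF : MapsTo F (Icc 0 1) (Icc 0 1))
    (hlip : ∀ a ∈ Icc (0 : ℝ) 1, ∀ b ∈ Icc (0 : ℝ) 1, |F a - F b| ≤ β * |a - b|) (hβ : β < 1)
    (hF1 : LeftJet 1 F F' 1 β) (hh : MapsTo h (Icc 0 1) (Icc 0 1))
    (hfix : ∀ x ∈ Icc (0 : ℝ) 1, h x = x * F (h x)) (hh1 : h 1 = 1) :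
    LeftJet 0 (fun θ => h (Real.exp θ))
      (fun θ => h (Real.exp θ) / (1 - Real.exp θ * F' (h (Real.exp θ)))) 1 (1 / (1 - β)) := by
  have hk := tendsto_comp_exp_of_eq_mul_comp hF hlip hβ hh hfix hh1
  have hk1 : Tendsto (fun θ => h (Real.exp θ)) (𝓝[<] 0) (𝓝 1) :=
    hk.mono_right nhdsWithin_le_nhds
  have hu : Tendsto (fun θ => Real.exp θ * F' (h (Real.exp θ))) (𝓝[<] 0) (𝓝 β) := by
    simpa using leftJet_exp.2.1.mul (hF1.2.2.comp hk)
  have hcont := continuousOn_of_eq_mul_comp hF hlip hβ hh hfix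
  refine ⟨?_, hk1, hk1.div (tendsto_const_nhds.sub hu) (by linarith)⟩
  filter_upwards [eventually_exp_mem_Ioo, hk.eventually hF1.1,
    (hF1.2.1.comp hk).eventually_ne one_ne_zero, hu.eventually_ne hβ.ne] with θ hθ hF' hF0 hu1
  have hIcc : Icc (0 : ℝ) 1 ∈ 𝓝 (Real.exp θ) := Icc_mem_nhds hθ.1 hθ.2
  have hfixθ := hfix _ (Ioo_subset_Icc_self hθ)
  refine ((hasDerivAt_of_eq_mul_comp (eventually_of_mem hIcc hfix)
    (hcont.continuousAt hIcc) hF' hF0 hu1).comp θ (Real.hasDerivAt_exp θ)).congr_deriv ?_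
  rw [div_mul_eq_mul_div, mul_comm, ← hfixθ]

theorem exists_leftJets_comp_exp_of_eq_mul_comp (hF : MapsTo F (Icc 0 1) (Icc 0 1))
    (hlip : ∀ a ∈ Icc (0 : ℝ) 1, ∀ b ∈ Icc (0 : ℝ) 1, |F a - F b| ≤ β * |a - b|) (hβ : β < 1)
    (hF1 : LeftJet 1 F F' 1 β) (hF2 : LeftJet 1 F' F'' β c) (hh : MapsTo h (Icc 0 1) (Icc 0 1))
    (hfix : ∀ x ∈ Icc (0 : ℝ) 1, h x = x * F (h x)) (hh1 : h 1 = 1) :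
    ∃ (k'' u' : ℝ → ℝ) (d e : ℝ),
      LeftJet 0 (fun θ => h (Real.exp θ) / (1 - Real.exp θ * F' (h (Real.exp θ)))) k''
        (1 / (1 - β)) d ∧ LeftJet 0 (fun θ => Real.exp θ * F' (h (Real.exp θ))) u' β e := by
  have hk := leftJet_comp_exp_of_eq_mul_comp hF hlip hβ hF1 hh hfix hh1
  have hlt := (tendsto_comp_exp_of_eq_mul_comp hF hlip hβ hh hfix hh1).eventually
    self_mem_nhdsWithin
  have hu := leftJet_exp.mul (hF2.comp hk hlt)
  rw [one_mul] at hu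
  exact ⟨_, _, _, _, hk.div ((LeftJet.const 0 1).sub hu) (sub_ne_zero.2 hβ.ne'), hu⟩

end FixedPointEquation

section Iterates

variable {F F' F'' : ℝ → ℝ} {β c : ℝ}

theorem iterate_mem_Icc (hF : MapsTo F (Icc 0 1) (Icc 0 1)) {g : ℕ → ℝ → ℝ}
    (hg0 : ∀ x, g 0 x = 1) (hg : ∀ n x, g (n + 1) x = x * F (g n x)) (n : ℕ) {x : ℝ}
    (hx : x ∈ Icc (0 : ℝ) 1) : g n x ∈ Icc (0 : ℝ) 1 := by
  induction n with
  | zero => simp [hg0]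
  | succ n ih =>
    have hF := hF ih
    rw [hg]
    exact ⟨mul_nonneg hx.1 hF.1, mul_le_one₀ hx.2 hF.1 hF.2⟩

theorem leftJet_iterate_comp_exp (hF : MapsTo F (Icc 0 1) (Icc 0 1)) (hF1' : F 1 = 1)
    (hF1 : LeftJet 1 F F' 1 β) (hF2 : LeftJet 1 F' F'' β c) (hβ : β ≠ 1) {g : ℕ → ℝ → ℝ}
    (hg0 : ∀ x, g 0 x = 1) (hg : ∀ n x, g (n + 1) x = x * F (g n x)) (n : ℕ) (hn : 1 ≤ n) :
    ∃ (g' g'' : ℝ → ℝ) (d : ℝ), LeftJet 0 (fun θ => g n (Real.exp θ)) g' 1 ((1 - β ^ n) / (1 - β))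
      ∧ LeftJet 0 g' g'' ((1 - β ^ n) / (1 - β)) d := by
  have hβ' : 1 - β ≠ 0 := sub_ne_zero.2 hβ.symm
  induction n, hn using Nat.le_induction with
  | base =>
    have hg1 : (fun θ => g 1 (Real.exp θ)) = Real.exp := funext fun θ => by simp [hg, hg0, hF1']
    rw [hg1, pow_one, div_self hβ']
    exact ⟨_, _, _, leftJet_exp, leftJet_exp⟩
  | succ n hn ih =>
    obtain ⟨g', g'', d, hk, hk'⟩ := ih
    have hlt : ∀ᶠ θ in 𝓝[<] 0, g n (Real.exp θ) < 1 := by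
      obtain ⟨m, rfl⟩ := Nat.exists_eq_add_of_le' hn
      filter_upwards [eventually_exp_mem_Ioo] with θ hθ
      have hx : Real.exp θ ∈ Icc (0 : ℝ) 1 := Ioo_subset_Icc_self hθ
      rw [hg]
      exact mul_lt_one_of_nonneg_of_lt_one_left hx.1 hθ.2 (hF (iterate_mem_Icc hF hg0 hg m hx)).2
    have hFk := hF1.comp hk hlt
    have hjet := leftJet_exp.mul hFk
    have hjet' := (leftJet_exp.mul hFk).add (leftJet_exp.mul ((hF2.comp hk hlt).mul hk'))
    have hval : 1 * 1 + 1 * (β * ((1 - β ^ n) / (1 - β))) = (1 - β ^ (n + 1)) / (1 - β) := by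
      field_simp; ring
    rw [hval, one_mul] at hjet
    rw [hval] at hjet'
    refine ⟨_, _, _, ?_, hjet'⟩
    simpa only [hg] using hjet

end Iterates

theorem Delta_over_u_pow_expansion_general
    (π : ℕ → ℝ) (hπ_nn : ∀ k, 0 ≤ π k) (hπ_sum : ∑' k, π k = 1)
    (fq fq' fq'' : ℝ → ℝ)
    (hfq : ∀ s, fq s = ∑' k, π k * s ^ k)
    (hfq' : ∀ s, fq' s = ∑' k : ℕ, ((k : ℝ) + 1) * π (k + 1) * s ^ k)
    (hfq'' : ∀ s, fq'' s = ∑' k : ℕ, ((k : ℝ) + 2) * ((k : ℝ) + 1) * π (k + 2) * s ^ k)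
    (β : ℝ) (hβ : β = fq' 1) (hβ_pos : 0 < β) (hβ_lt : β < 1)
    (hbq_fin : Summable fun k : ℕ => ((k : ℝ) + 2) * ((k : ℝ) + 1) * π (k + 2))
    (H : ℕ → ℝ → ℝ → ℝ)
    (hH0 : ∀ s x : ℝ, H 0 s x = s)
    (hHrec : ∀ (n : ℕ) (s x : ℝ), H (n + 1) s x = x * fq (H n s x))
    (h : ℝ → ℝ)
    (hh_lim : ∀ x ∈ Set.Icc (0 : ℝ) 1, Tendsto (fun n => H n 1 x) atTop (𝓝 (h x)))
    (hh_fix : ∀ x ∈ Set.Icc (0 : ℝ) 1, h x = x * fq (h x))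
    (hh_one : h 1 = 1)
    (u : ℝ → ℝ) (hu : ∀ x, u x = x * fq' (h x)) :
    ∀ n : ℕ, 1 ≤ n →
      ∃ C : ℝ, Tendsto (fun θ =>
          ((h (Real.exp θ) - H n 1 (Real.exp θ)) / u (Real.exp θ) ^ n - θ / (1 - β)) / θ ^ 2)
        (𝓝[<] 0) (𝓝 C) := by
  intro n hn
  have hπ : Summable π := by
    by_contra hns
    simp [tsum_eq_zero_of_not_summable hns] at hπ_sum
  have hπ' := summable_succ_mul_of_summable_succ_succ_mul hπ_nn hbq_fin
  have hfq1 : fq 1 = 1 := by simpa [hfq] using hπ_sum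
  obtain ⟨hF1, hF2⟩ := leftJets_one_of_tsum hπ hπ' hbq_fin hfq hfq' hfq''
  rw [hfq1, ← hβ] at hF1
  rw [← hβ] at hF2
  have hmaps := mapsTo_Icc_of_tsum hπ_nn hπ hπ_sum hfq
  have hlip := hβ ▸ abs_sub_le_of_tsum hπ_nn hπ hπ' hfq hfq'
  have hh : MapsTo h (Icc 0 1) (Icc 0 1) := fun x hx =>
    isClosed_Icc.mem_of_tendsto (hh_lim x hx) (.of_forall fun m =>
      iterate_mem_Icc hmaps (g := fun n x => H n 1 x) (hH0 1) (fun n => hHrec n 1) m hx)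
  have hk := leftJet_comp_exp_of_eq_mul_comp hmaps hlip hβ_lt hF1 hh hh_fix hh_one
  obtain ⟨k'', u', d, e, hk', hu'⟩ :=
    exists_leftJets_comp_exp_of_eq_mul_comp hmaps hlip hβ_lt hF1 hF2 hh hh_fix hh_one
  obtain ⟨g', g'', d', hkn, hkn'⟩ := leftJet_iterate_comp_exp hmaps hfq1 hF1 hF2 hβ_lt.ne
    (g := fun n x => H n 1 x) (hH0 1) (fun n => hHrec n 1) n hn
  have hD := hk.sub hkn
  have hD' := hk'.sub hkn'
  have hval : 1 / (1 - β) - (1 - β ^ n) / (1 - β) = β ^ n / (1 - β) := by ring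
  rw [sub_self, hval] at hD
  rw [hval] at hD'
  simp only [hu]
  exact ⟨_, hD.tendsto_div_sub_div_sq hD' (hu'.pow n) (pow_ne_zero n hβ_pos.ne')⟩

theorem Delta_over_u_pow_expansion
    (π : ℕ → ℝ) (hπ_nn : ∀ k, 0 ≤ π k) (hπ_sum : ∑' k, π k = 1)
    (hπ0 : 0 < π 0) (hπ01 : π 0 + π 1 < 1)
    (fq fq' fq'' : ℝ → ℝ)
    (hfq : ∀ s, fq s = ∑' k, π k * s ^ k)
    (hfq' : ∀ s, fq' s = ∑' k : ℕ, ((k : ℝ) + 1) * π (k + 1) * s ^ k)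
    (hfq'' : ∀ s, fq'' s = ∑' k : ℕ, ((k : ℝ) + 2) * ((k : ℝ) + 1) * π (k + 2) * s ^ k)
    (β : ℝ) (hβ : β = fq' 1) (hβ_pos : 0 < β) (hβ_lt : β < 1)
    (bq : ℝ) (hbq : bq = fq'' 1)
    (hbq_fin : Summable fun k : ℕ => ((k : ℝ) + 2) * ((k : ℝ) + 1) * π (k + 2))
    (γq : ℝ) (hγq : γq = bq / (β * (1 - β)))
    (H : ℕ → ℝ → ℝ → ℝ)
    (hH0 : ∀ s x : ℝ, H 0 s x = s)
    (hHrec : ∀ (n : ℕ) (s x : ℝ), H (n + 1) s x = x * fq (H n s x))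
    (h : ℝ → ℝ)
    (hh_lim : ∀ x ∈ Set.Icc (0 : ℝ) 1, Tendsto (fun n => H n 1 x) atTop (𝓝 (h x)))
    (hh_fix : ∀ x ∈ Set.Icc (0 : ℝ) 1, h x = x * fq (h x))
    (hh_one : h 1 = 1)
    (u : ℝ → ℝ) (hu : ∀ x, u x = x * fq' (h x)) :
    ∀ n : ℕ, 1 ≤ n →
      ∃ C : ℝ, Tendsto (fun θ =>
          ((h (Real.exp θ) - H n 1 (Real.exp θ)) / u (Real.exp θ) ^ n - θ / (1 - β)) / θ ^ 2)
        (𝓝[<] 0) (𝓝 C) :=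
  Delta_over_u_pow_expansion_general π hπ_nn hπ_sum fq fq' fq'' hfq hfq' hfq'' β hβ hβ_pos hβ_lt
    hbq_fin H hH0 hHrec h hh_lim hh_fix hh_one u hu
end
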